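/- arXiv:1801.07062 — 2 statements merged into one kernel-verified Lean document; each statement's English description precedes it below -/
import Mathlib

section
/- Let $d > 2$ be an integer and let $\phi \in C^1(\mathbb{R}^+;\mathbb{R}^+)$ satisfy $\max_{r\ge 0}\phi(r)=\phi(0)$ and $\max_{r\ge 0}|r\phi(r)|=A_\infty<\infty$. Suppose $\rho, v : [0,\infty)\to\mathbb{R}$ are $C^1$ with $\rho(0)=a>0$, $v(0)=0$, $v'(r)=r^{d-1}\rho(r)$, and $\rho'(r)=-\rho(r)\frac{v(r)}{r^{d-1}}\phi(\frac{v(r)}{r^{d-1}})$ for $r>0$. Then $\int_0^\infty r^{d-1}\rho(r)\,dr = +\infty$; i.e., there is no radially symmetric positive steady state with finite mass. -/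
/-!
Write `w = v / r^(d-1)` for the (radial) chemotactic drift, so that `ρ' = -ρ w φ(w)`.
Since `|w φ(w)| ≤ A∞`, the function `ρ e^{A∞ r}` is nondecreasing up to any first zero of `ρ`,
so `ρ > 0`; hence `v' = r^(d-1) ρ ≥ 0` and `0 ≤ v ≤ M`, the mass. Then
`w φ(w) ≤ M φ(0) r^(1-d)`, whose antiderivative `-M φ(0) r^(2-d) / (d-2)` is bounded on `[1, ∞)`
because `d > 2`. So `ρ` stays above a positive constant at infinity and the mass is infinite.
-/

open Real Set MeasureTheory Filter Topology

theorem monotoneOn_mul_exp_of_hasDerivAt {f g G G' : ℝ → ℝ} {s : Set ℝ} (hs : Convex ℝ s)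
    (hf : ContinuousOn f s) (hG : ContinuousOn G s)
    (hf' : ∀ x ∈ interior s, HasDerivAt f (-(f x * g x)) x)
    (hG' : ∀ x ∈ interior s, HasDerivAt G (G' x) x)
    (hf₀ : ∀ x ∈ interior s, 0 ≤ f x) (hgG : ∀ x ∈ interior s, g x ≤ G' x) :
    MonotoneOn (fun x => f x * exp (G x)) s := by
  refine monotoneOn_of_hasDerivWithinAt_nonneg hs (hf.mul (continuous_exp.comp_continuousOn hG))
    (fun x hx => ((hf' x hx).mul (hG' x hx).exp).hasDerivWithinAt) fun x hx => ?_
  have key : -(f x * g x) * exp (G x) + f x * (exp (G x) * G' x)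
      = f x * exp (G x) * (G' x - g x) := by ring
  rw [key]
  exact mul_nonneg (mul_nonneg (hf₀ x hx) (exp_pos _).le) (sub_nonneg.2 (hgG x hx))

theorem pos_of_pos_of_forall_Ico_pos {f : ℝ → ℝ} (hf : ContinuousOn f (Ici 0)) (h₀ : 0 < f 0)
    (h : ∀ t > 0, (∀ x ∈ Ico 0 t, 0 < f x) → 0 < f t) : ∀ x ≥ 0, 0 < f x := by
  by_contra! hneg
  set S := Ici 0 ∩ f ⁻¹' Iic 0
  have hS : IsClosed S := hf.preimage_isClosed_of_isClosed isClosed_Ici isClosed_Iic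
  have hSbdd : BddBelow S := ⟨0, fun x hx => hx.1⟩
  obtain ⟨x₀, hx₀, hfx₀⟩ := hneg
  obtain ⟨hi₀, hi : f (sInf S) ≤ 0⟩ : sInf S ∈ S := hS.csInf_mem ⟨x₀, hx₀, hfx₀⟩ hSbdd
  have hfirst : ∀ x ∈ Ico 0 (sInf S), 0 < f x := fun x hx =>
    not_le.1 fun hfx => (csInf_le hSbdd ⟨hx.1, hfx⟩).not_gt hx.2
  rcases (mem_Ici.1 hi₀).eq_or_lt with h0 | hpos
  · rw [← h0] at hi
    exact h₀.not_ge hi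
  · exact (h _ hpos hfirst).not_ge hi

theorem hasDerivAt_inv_pow (n : ℕ) {x : ℝ} (hx : x ≠ 0) :
    HasDerivAt (fun y => (y ^ n)⁻¹) (-(n / x ^ (n + 1))) x := by
  refine ((hasDerivAt_pow n x).inv (pow_ne_zero n hx)).congr_deriv ?_
  rcases n with _ | n
  · simp
  · rw [Nat.add_sub_cancel]
    field_simp
    ring

theorem not_integrableOn_Ioi_of_const_le {f : ℝ → ℝ} {a c : ℝ} (hc : 0 < c)
    (hf : ∀ x ∈ Ioi a, c ≤ f x) : ¬ IntegrableOn f (Ioi a) := by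
  intro hI
  have : IntegrableOn (fun _ => c) (Ioi a) :=
    hI.mono' aestronglyMeasurable_const <| (ae_restrict_mem measurableSet_Ioi).mono
      fun x hx => by rw [norm_of_nonneg hc.le]; exact hf x hx
  rw [integrableOn_const_iff] at this
  simp [hc.ne'] at this

namespace RadialSteadyState

variable {d : ℕ} {φ ρ v : ℝ → ℝ}

theorem v_monotoneOn {s : Set ℝ} (hs : Convex ℝ s) (hs₀ : s ⊆ Ici 0) (hvC : ContinuousOn v s)
    (hv' : ∀ r > 0, HasDerivAt v (r ^ (d - 1) * ρ r) r) (hρ : ∀ x ∈ interior s, 0 ≤ ρ x) :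
    MonotoneOn v s := by
  have hpos : ∀ x ∈ interior s, 0 < x := fun x hx => by
    simpa only [interior_Ici, mem_Ioi] using interior_mono hs₀ hx
  exact monotoneOn_of_hasDerivWithinAt_nonneg hs hvC
    (fun x hx => (hv' x (hpos x hx)).hasDerivWithinAt)
    fun x hx => mul_nonneg (pow_pos (hpos x hx) _).le (hρ x hx)

theorem rho_pos {Ainf : ℝ} (hAinf : ∀ r ≥ 0, |r * φ r| ≤ Ainf) (hρ0 : 0 < ρ 0) (hv0 : v 0 = 0)
    (hρC : ContinuousOn ρ (Ici 0)) (hvC : ContinuousOn v (Ici 0))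
    (hv' : ∀ r > 0, HasDerivAt v (r ^ (d - 1) * ρ r) r)
    (hρ' : ∀ r > 0,
      HasDerivAt ρ (-(ρ r * (v r / r ^ (d - 1)) * φ (v r / r ^ (d - 1)))) r) :
    ∀ r ≥ 0, 0 < ρ r := by
  refine pos_of_pos_of_forall_Ico_pos hρC hρ0 fun t ht hρt => ?_
  replace hρt : ∀ x ∈ interior (Icc 0 t), 0 < ρ x := fun x hx =>
    hρt x (Ioo_subset_Ico_self (by rwa [interior_Icc] at hx))
  have hvmono : MonotoneOn v (Icc 0 t) := v_monotoneOn (convex_Icc 0 t) Icc_subset_Ici_self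
    (hvC.mono Icc_subset_Ici_self) hv' fun x hx => (hρt x hx).le
  have hgrowth : MonotoneOn (fun x => ρ x * exp (Ainf * x)) (Icc 0 t) := by
    refine monotoneOn_mul_exp_of_hasDerivAt
      (g := fun x => v x / x ^ (d - 1) * φ (v x / x ^ (d - 1)))
      (convex_Icc 0 t) (hρC.mono Icc_subset_Ici_self) (by fun_prop)
      (fun x hx => by
        rw [interior_Icc] at hx
        simpa only [mul_assoc] using hρ' x hx.1)
      (fun x _ => by simpa using (hasDerivAt_id x).const_mul Ainf)
      (fun x hx => (hρt x hx).le) fun x hx => ?_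
    rw [interior_Icc] at hx
    have hv : 0 ≤ v x := hv0 ▸ hvmono (left_mem_Icc.2 ht.le) (Ioo_subset_Icc_self hx) hx.1.le
    exact (le_abs_self _).trans (hAinf _ (div_nonneg hv (pow_pos hx.1 _).le))
  have hends := hgrowth (left_mem_Icc.2 ht.le) (right_mem_Icc.2 ht.le) ht.le
  simp only [mul_zero, exp_zero, mul_one] at hends
  exact pos_of_mul_pos_left (hρ0.trans_le hends) (exp_pos _).le

theorem v_le_integral (hv0 : v 0 = 0) (hvC : ContinuousOn v (Ici 0))
    (hρC : ContinuousOn ρ (Ici 0)) (hv' : ∀ r > 0, HasDerivAt v (r ^ (d - 1) * ρ r) r)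
    (hρ : ∀ r ≥ 0, 0 ≤ ρ r) (hI : IntegrableOn (fun r => r ^ (d - 1) * ρ r) (Ioi 0))
    {r : ℝ} (hr : 0 ≤ r) : v r ≤ ∫ x in Ioi 0, x ^ (d - 1) * ρ x := by
  have hint : IntervalIntegrable (fun x => x ^ (d - 1) * ρ x) volume 0 r :=
    ((continuousOn_pow _).mul
      (hρC.mono (by rw [uIcc_of_le hr]; exact Icc_subset_Ici_self))).intervalIntegrable
  calc v r = ∫ x in 0..r, x ^ (d - 1) * ρ x := by
        rw [intervalIntegral.integral_eq_sub_of_hasDerivAt_of_le hr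
          (hvC.mono Icc_subset_Ici_self) (fun x hx => hv' x hx.1) hint, hv0, sub_zero]
    _ = ∫ x in Ioc 0 r, x ^ (d - 1) * ρ x := intervalIntegral.integral_of_le hr
    _ ≤ ∫ x in Ioi 0, x ^ (d - 1) * ρ x := by
        refine setIntegral_mono_set hI ?_ Ioc_subset_Ioi_self.eventuallyLE
        filter_upwards [ae_restrict_mem measurableSet_Ioi] with x hx
        exact mul_nonneg (pow_pos hx _).le (hρ x (le_of_lt hx))

theorem exists_pos_le_rho (hd : 2 < d) {M : ℝ} (hφnn : ∀ r ≥ 0, 0 ≤ φ r)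
    (hφmax : ∀ r ≥ 0, φ r ≤ φ 0) (hρC : ContinuousOn ρ (Ici 0))
    (hρ' : ∀ r > 0,
      HasDerivAt ρ (-(ρ r * (v r / r ^ (d - 1)) * φ (v r / r ^ (d - 1)))) r)
    (hρ : ∀ r ≥ 0, 0 < ρ r) (hv₀ : ∀ r ≥ 0, 0 ≤ v r) (hvM : ∀ r ≥ 0, v r ≤ M) :
    ∃ c > 0, ∀ r ≥ 1, c ≤ ρ r := by
  obtain ⟨n, rfl⟩ : ∃ n, d = n + 2 := ⟨d - 2, by omega⟩
  rw [show n + 2 - 1 = n + 1 from rfl] at hρ'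
  have hn : (0 : ℝ) < n := by exact_mod_cast (by omega : 0 < n)
  have hMφ : 0 ≤ M * φ 0 := mul_nonneg ((hv₀ 0 le_rfl).trans (hvM 0 le_rfl)) (hφnn 0 le_rfl)
  set G : ℝ → ℝ := fun x => -(M * φ 0 / n * (x ^ n)⁻¹)
  have hG : ∀ x > 0, HasDerivAt G (M * φ 0 / x ^ (n + 1)) x := fun x hx => by
    refine (((hasDerivAt_inv_pow n hx.ne').const_mul (M * φ 0 / n)).neg).congr_deriv ?_
    field_simp
  have hG_nonpos : ∀ x ≥ 0, G x ≤ 0 := fun x hx =>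
    neg_nonpos.2 (mul_nonneg (div_nonneg hMφ hn.le) (inv_nonneg.2 (pow_nonneg hx n)))
  have hint : ∀ x ∈ interior (Ici (1 : ℝ)), 0 < x := fun x hx => by
    rw [interior_Ici] at hx
    exact zero_lt_one.trans hx
  have hgrowth : MonotoneOn (fun x => ρ x * exp (G x)) (Ici 1) := by
    refine monotoneOn_mul_exp_of_hasDerivAt
      (g := fun x => v x / x ^ (n + 1) * φ (v x / x ^ (n + 1)))
      (convex_Ici 1) (hρC.mono (Ici_subset_Ici.2 zero_le_one))
      (fun x hx => (hG x (zero_lt_one.trans_le hx)).continuousAt.continuousWithinAt)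
      (fun x hx => by simpa only [mul_assoc] using hρ' x (hint x hx)) (fun x hx => hG x (hint x hx))
      (fun x hx => (hρ x (hint x hx).le).le) fun x hx => ?_
    have hx := hint x hx
    have hw : 0 ≤ v x / x ^ (n + 1) := div_nonneg (hv₀ x hx.le) (pow_pos hx _).le
    calc v x / x ^ (n + 1) * φ (v x / x ^ (n + 1)) ≤ M / x ^ (n + 1) * φ 0 :=
          mul_le_mul (div_le_div_of_nonneg_right (hvM x hx.le) (pow_pos hx _).le) (hφmax _ hw)
            (hφnn _ hw) (div_nonneg ((hv₀ x hx.le).trans (hvM x hx.le)) (pow_pos hx _).le)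
      _ = M * φ 0 / x ^ (n + 1) := by ring
  refine ⟨ρ 1 * exp (G 1), mul_pos (hρ 1 zero_le_one) (exp_pos _), fun r hr => ?_⟩
  calc ρ 1 * exp (G 1) ≤ ρ r * exp (G r) := hgrowth self_mem_Ici hr hr
    _ ≤ ρ r := mul_le_of_le_one_right (hρ r (zero_le_one.trans hr)).le
        (exp_le_one_iff.2 (hG_nonpos r (zero_le_one.trans hr)))

end RadialSteadyState

open RadialSteadyState in
theorem stmt_1_general (d : ℕ) (hd : 2 < d) (φ ρ v : ℝ → ℝ) (Ainf a : ℝ)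
    (hφnn : ∀ r ≥ 0, 0 ≤ φ r)
    (hφmax : ∀ r ≥ 0, φ r ≤ φ 0) (hAinf : ∀ r ≥ 0, |r * φ r| ≤ Ainf)
    (ha : 0 < a) (hρ0 : ρ 0 = a) (hv0 : v 0 = 0)
    (hρC : ContinuousOn ρ (Ici 0)) (hvC : ContinuousOn v (Ici 0))
    (hv' : ∀ r > 0, HasDerivAt v (r ^ (d - 1) * ρ r) r)
    (hρ' : ∀ r > 0,
      HasDerivAt ρ (-(ρ r * (v r / r ^ (d - 1)) * φ (v r / r ^ (d - 1)))) r) :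
    ¬ IntegrableOn (fun r => r ^ (d - 1) * ρ r) (Ioi (0 : ℝ)) := by
  intro hI
  have hρ : ∀ r ≥ 0, 0 < ρ r := rho_pos hAinf (hρ0 ▸ ha) hv0 hρC hvC hv' hρ'
  have hv₀ : ∀ r ≥ 0, 0 ≤ v r := fun r hr =>
    hv0 ▸ v_monotoneOn (convex_Ici 0) subset_rfl hvC hv'
      (fun x hx => (hρ x (interior_subset hx)).le) self_mem_Ici hr hr
  obtain ⟨c, hc, hlow⟩ := exists_pos_le_rho hd hφnn hφmax hρC hρ' hρ hv₀
    fun r hr => v_le_integral hv0 hvC hρC hv' (fun x hx => (hρ x hx).le) hI hr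
  refine not_integrableOn_Ioi_of_const_le hc (fun x hx => ?_)
    (hI.mono_set (Ioi_subset_Ioi zero_le_one))
  have hx : (1 : ℝ) ≤ x := le_of_lt hx
  calc c ≤ ρ x := hlow x hx
    _ ≤ x ^ (d - 1) * ρ x := le_mul_of_one_le_left (hρ x (zero_le_one.trans hx)).le (one_le_pow₀ hx)

/-- In dimension `d > 2` there is no radially symmetric positive steady state with
finite mass: the mass integral `∫_0^∞ r^{d-1} ρ(r) dr` diverges. -/
theorem stmt_1 (d : ℕ) (hd : 2 < d) (φ ρ v : ℝ → ℝ) (Ainf a : ℝ)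
    (hφC1 : ContDiffOn ℝ 1 φ (Ici 0)) (hφnn : ∀ r ≥ 0, 0 ≤ φ r)
    (hφmax : ∀ r ≥ 0, φ r ≤ φ 0) (hAinf : ∀ r ≥ 0, |r * φ r| ≤ Ainf)
    (ha : 0 < a) (hρ0 : ρ 0 = a) (hv0 : v 0 = 0)
    (hρC : ContinuousOn ρ (Ici 0)) (hvC : ContinuousOn v (Ici 0))
    (hρC1 : ContDiffOn ℝ 1 ρ (Ici 0)) (hvC1 : ContDiffOn ℝ 1 v (Ici 0))
    (hv' : ∀ r > 0, HasDerivAt v (r ^ (d - 1) * ρ r) r)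
    (hρ' : ∀ r > 0,
      HasDerivAt ρ (-(ρ r * (v r / r ^ (d - 1)) * φ (v r / r ^ (d - 1)))) r) :
    ¬ IntegrableOn (fun r => r ^ (d - 1) * ρ r) (Ioi (0 : ℝ)) :=
  stmt_1_general d hd φ ρ v Ainf a hφnn hφmax hAinf ha hρ0 hv0 hρC hvC hv' hρ'
end

section
/- Let $\phi \in C^1(\mathbb{R}^+;\mathbb{R}^+)$ satisfy $\max_{r\ge 0}\phi(r)=\phi(0)>0$. Let $v : [0,\infty)\to\mathbb{R}$ be a $C^2$ solution of $r v''(r) = v'(r)\big(1 - v(r)\phi(v(r)/r)\big)$ for $r>0$ with $v(0)=v'(0)=0$, $v''(0)=a>0$, and $v(r)>0$ for $r>0$. Then $v'(r) > 0$ for all $r > 0$. -/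
open Real Set MeasureTheory Filter Topology

/-!
Away from `r = 0` the equation is linear in `w = v'`: `w' = g w` with
`g r = (1 - v r φ (v r / r)) / r` continuous on `(0, ∞)`. Hence `w = c · exp (∫ g)` there, so `w`
cannot change sign on `(0, ∞)`; and `w (0) = 0`, `w' (0) = a > 0` make `w` positive somewhere.
-/

theorem HasDerivAt.exists_gt_of_pos {f : ℝ → ℝ} {f' x : ℝ} (hf : HasDerivAt f f' x)
    (hf' : 0 < f') : ∃ y > x, f x < f y := by
  have hslope : Tendsto (slope f x) (𝓝[>] x) (𝓝 f') := by
    simpa using (hasDerivWithinAt_iff_tendsto_slope.1 (hf.hasDerivWithinAt (s := Ioi x)))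
  obtain ⟨y, hxy : x < y, hy⟩ :=
    (eventually_mem_nhdsWithin.and (hslope.eventually_const_lt hf')).exists
  rw [slope_def_field] at hy
  exact ⟨y, hxy, sub_pos.1 ((div_pos_iff_of_pos_right (sub_pos.2 hxy)).1 hy)⟩

theorem hasDerivAt_intervalIntegral_of_continuousOn {s : Set ℝ} {g : ℝ → ℝ} {a t : ℝ}
    (hs : IsOpen s) (hs' : s.OrdConnected) (hg : ContinuousOn g s) (ha : a ∈ s) (ht : t ∈ s) :
    HasDerivAt (fun u => ∫ x in a..u, g x) (g t) t :=
  intervalIntegral.integral_hasDerivAt_right ((hg.mono (hs'.uIcc_subset ha ht)).intervalIntegrable)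
    (hg.stronglyMeasurableAtFilter hs t ht) (hg.continuousAt (hs.mem_nhds ht))

section LinearODE

variable {s : Set ℝ} {g G w : ℝ → ℝ}

theorem exists_eq_mul_exp_of_hasDerivAt_eq_mul (hs : IsOpen s) (hs' : IsPreconnected s)
    (hG : ∀ t ∈ s, HasDerivAt G (g t) t) (hw : ∀ t ∈ s, HasDerivAt w (g t * w t) t) :
    ∃ c, ∀ t ∈ s, w t = c * exp (G t) := by
  have hderiv : ∀ t ∈ s, HasDerivAt (fun u => w u * exp (-G u)) 0 t := by
    intro t ht
    exact ((hw t ht).fun_mul (hG t ht).fun_neg.exp).congr_deriv (by ring)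
  obtain ⟨c, hc⟩ := hs.exists_is_const_of_deriv_eq_zero hs'
    (fun t ht => (hderiv t ht).differentiableAt.differentiableWithinAt)
    (fun t ht => (hderiv t ht).deriv)
  refine ⟨c, fun t ht => ?_⟩
  rw [← hc t ht, mul_assoc, ← exp_add, neg_add_cancel, exp_zero, mul_one]

theorem pos_of_hasDerivAt_eq_mul (hs : IsOpen s) (hs' : IsPreconnected s)
    (hg : ContinuousOn g s) (hw : ∀ t ∈ s, HasDerivAt w (g t * w t) t)
    {x : ℝ} (hx : x ∈ s) (hwx : 0 < w x) {t : ℝ} (ht : t ∈ s) : 0 < w t := by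
  obtain ⟨c, hc⟩ := exists_eq_mul_exp_of_hasDerivAt_eq_mul hs hs'
    (fun t ht => hasDerivAt_intervalIntegral_of_continuousOn hs hs'.ordConnected hg hx ht) hw
  have hcpos : 0 < c := by
    rw [hc x hx] at hwx
    exact pos_of_mul_pos_left hwx (exp_pos _).le
  rw [hc t ht]
  positivity

end LinearODE

theorem stmt_2_general (φ v : ℝ → ℝ) (a : ℝ)
    (hφC1 : ContDiffOn ℝ 1 φ (Ici 0))
    (hvC2 : ContDiffOn ℝ 2 v (Ici 0))
    (hode : ∀ r > 0, r * deriv (deriv v) r = deriv v r * (1 - v r * φ (v r / r)))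
    (hv'0 : deriv v 0 = 0) (hv''0 : deriv (deriv v) 0 = a)
    (ha : 0 < a) (hvpos : ∀ r > 0, 0 < v r) :
    ∀ r > 0, 0 < deriv v r := by
  set g : ℝ → ℝ := fun r => (1 - v r * φ (v r / r)) / r
  have hv : ContinuousOn v (Ioi 0) := hvC2.continuousOn.mono Ioi_subset_Ici_self
  have hg : ContinuousOn g (Ioi 0) := by
    have hquot : ContinuousOn (fun r => v r / r) (Ioi 0) :=
      hv.div continuousOn_id fun r hr => hr.ne'
    refine (continuousOn_const.sub (hv.mul (hφC1.continuousOn.comp hquot ?_))).div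
      continuousOn_id fun r hr => hr.ne'
    exact fun r hr => (div_pos (hvpos r hr) hr).le
  have hw : ∀ r ∈ Ioi (0 : ℝ), HasDerivAt (deriv v) (g r * deriv v r) r := by
    intro r (hr : 0 < r)
    have hdiff : DifferentiableAt ℝ (deriv v) r :=
      ((hvC2.mono Ioi_subset_Ici_self).deriv_of_isOpen isOpen_Ioi (by norm_num)).differentiableOn
        one_ne_zero |>.differentiableAt (isOpen_Ioi.mem_nhds hr)
    refine hdiff.hasDerivAt.congr_deriv ?_
    rw [div_mul_eq_mul_div, eq_div_iff hr.ne', mul_comm, hode r hr, mul_comm]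
  have hw0 : HasDerivAt (deriv v) a 0 := by
    rw [← hv''0]
    exact (differentiableAt_of_deriv_ne_zero (hv''0 ▸ ha.ne')).hasDerivAt
  obtain ⟨x, hx, hwx⟩ := hw0.exists_gt_of_pos ha
  rw [hv'0] at hwx
  exact fun r hr => pos_of_hasDerivAt_eq_mul isOpen_Ioi isPreconnected_Ioi hg hw hx hwx hr

/-- Every positive solution of the 2D radial stationary FLKS ODE
`r v'' = v'(1 - v φ(v/r))` with `v(0)=v'(0)=0`, `v''(0)=a>0` is strictly increasing. -/
theorem stmt_2 (φ v : ℝ → ℝ) (a : ℝ)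
    (hφC1 : ContDiffOn ℝ 1 φ (Ici 0)) (hφnn : ∀ r ≥ 0, 0 ≤ φ r)
    (hφmax : ∀ r ≥ 0, φ r ≤ φ 0) (hφ0 : 0 < φ 0)
    (hvC2 : ContDiffOn ℝ 2 v (Ici 0))
    (hode : ∀ r > 0, r * deriv (deriv v) r = deriv v r * (1 - v r * φ (v r / r)))
    (hv0 : v 0 = 0) (hv'0 : deriv v 0 = 0) (hv''0 : deriv (deriv v) 0 = a)
    (ha : 0 < a) (hvpos : ∀ r > 0, 0 < v r) :
    ∀ r > 0, 0 < deriv v r :=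
  stmt_2_general φ v a hφC1 hvC2 hode hv'0 hv''0 ha hvpos
end
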